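/- The digraphs T_3, C_2, C_3, C_5, ... (directed cycles of prime length together with the transitive tournament on 3 vertices) form an antichain with respect to satisfaction of the minor conditions {Σ_M, Σ_2, Σ_3, Σ_5, ...}: for each prime p, C_p satisfies Σ_M and Σ_q for all primes q ≠ p but not Σ_p; and T_3 satisfies Σ_q for all primes q but not Σ_M. Hence for any two distinct digraphs H, H' in this list, there is a minor condition satisfied by the polymorphisms of H but not by those of H'. -/

import Mathlib

/-- Edge relation of the directed cycle `C_n` on `ZMod n`. -/
def Cedge (n : ℕ) (u v : ZMod n) : Prop := u + 1 = v

/-- Edge relation of the transitive tournament `T_3`. -/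
def T3edge (u v : Fin 3) : Prop := u < v

/-- The digraph `(V, E)` has a cyclic polymorphism of arity `p > 0` (condition `Σ_p`). -/
def HasCyclicPoly {V : Type*} (E : V → V → Prop) (p : ℕ) (hp : 0 < p) : Prop :=
  ∃ f : (Fin p → V) → V,
    (∀ u v : Fin p → V, (∀ i, E (u i) (v i)) → E (f u) (f v)) ∧
    (∀ x : Fin p → V, f x = f (fun i => x ⟨(i.val + 1) % p, Nat.mod_lt _ hp⟩))

/-- The digraph `(V, E)` has an idempotent Maltsev polymorphism (condition `Σ_M`). -/
def HasMaltsevPoly {V : Type*} (E : V → V → Prop) : Prop :=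
  ∃ f : V → V → V → V,
    (∀ u₁ u₂ u₃ v₁ v₂ v₃ : V, E u₁ v₁ → E u₂ v₂ → E u₃ v₃ →
      E (f u₁ u₂ u₃) (f v₁ v₂ v₃)) ∧
    (∀ x, f x x x = x) ∧ (∀ x y, f y y x = x ∧ f x y y = x)

/-! `C_n` carries the affine operations of `ℤ/n`: `x - y + z` is Maltsev, and `q⁻¹ ∑ xᵢ` is
cyclic whenever `q` is invertible mod `n`. A `p`-ary cyclic polymorphism `f` of `C_p` fails on
`x = (0, 1, …, p-1)`: its rotation is the coordinatewise successor `x + 1`, so `f x + 1 = f x`.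
On `T_3`, `max` is cyclic of every arity, while a Maltsev `f` would give
`1 = f(0,0,1) < f(1,2,2) = 1`. -/

lemma Fin.mk_succ_mod_eq_finRotate {p : ℕ} (hp : 0 < p) (i : Fin p) :
    (⟨(i.val + 1) % p, Nat.mod_lt _ hp⟩ : Fin p) = finRotate p i := by
  have : NeZero p := ⟨hp.ne'⟩
  ext
  simp [Fin.val_add]

lemma hasCyclicPoly_iff {V : Type*} (E : V → V → Prop) (p : ℕ) (hp : 0 < p) :
    HasCyclicPoly E p hp ↔ ∃ f : (Fin p → V) → V,
      (∀ u v : Fin p → V, (∀ i, E (u i) (v i)) → E (f u) (f v)) ∧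
      ∀ x : Fin p → V, f x = f (x ∘ finRotate p) := by
  simp only [HasCyclicPoly, Fin.mk_succ_mod_eq_finRotate hp]
  rfl

lemma hasMaltsevPoly_cedge (n : ℕ) : HasMaltsevPoly (Cedge n) := by
  refine ⟨fun x y z => x - y + z, ?_, fun x => by ring, fun x y => ⟨by ring, by ring⟩⟩
  rintro u₁ u₂ u₃ _ _ _ rfl rfl rfl
  simp only [Cedge]
  ring

lemma hasCyclicPoly_cedge_of_coprime {n q : ℕ} (hq : 0 < q) (hqn : q.Coprime n) :
    HasCyclicPoly (Cedge n) q hq := by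
  set c := ZMod.unitOfCoprime q hqn
  refine (hasCyclicPoly_iff _ _ _).2 ⟨fun x => ↑c⁻¹ * ∑ i, x i, ?_, fun x => ?_⟩
  · rintro u v huv
    have hsum : ∑ i, v i = ∑ i, u i + c := by
      simp [← funext huv, Finset.sum_add_distrib, c]
    simp only [Cedge, hsum, mul_add, Units.inv_mul]
  · simp only [Function.comp_apply, Equiv.sum_comp]

lemma not_hasCyclicPoly_cedge_self {n : ℕ} (hn : 1 < n) :
    ¬ HasCyclicPoly (Cedge n) n (zero_lt_one.trans hn) := by
  have : Fact (1 < n) := ⟨hn⟩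
  intro h
  obtain ⟨f, hf, hcyc⟩ := (hasCyclicPoly_iff _ _ _).1 h
  let x : Fin n → ZMod n := fun i => (i : ℕ)
  have hedge : ∀ i, Cedge n (x i) ((x ∘ finRotate n) i) := fun i => by
    have : NeZero n := ⟨by omega⟩
    simp [x, Cedge, Fin.val_add, ZMod.natCast_mod]
  have h1 : f x + 1 = f (x ∘ finRotate n) := hf _ _ hedge
  rw [← hcyc x] at h1
  exact one_ne_zero (add_eq_left.mp h1)

lemma Finset.sup'_lt_sup' {ι α : Type*} [LinearOrder α] {s : Finset ι} (H : s.Nonempty)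
    {f g : ι → α} (hfg : ∀ i ∈ s, f i < g i) : s.sup' H f < s.sup' H g :=
  (Finset.sup'_lt_iff H).2 fun i hi => (hfg i hi).trans_le (Finset.le_sup' g hi)

lemma hasCyclicPoly_lt {α : Type*} [LinearOrder α] (p : ℕ) (hp : 0 < p) :
    HasCyclicPoly ((· < ·) : α → α → Prop) p hp := by
  have hne : (Finset.univ : Finset (Fin p)).Nonempty := ⟨⟨0, hp⟩, Finset.mem_univ _⟩
  refine (hasCyclicPoly_iff _ _ _).2
    ⟨fun x => Finset.univ.sup' hne x, fun u v huv => Finset.sup'_lt_sup' hne fun i _ => huv i,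
      fun x => ((Finset.sup'_comp_eq_map x hne).trans
        (Finset.sup'_congr _ (Finset.map_univ_equiv _) fun _ _ => rfl)).symm⟩

lemma not_hasMaltsevPoly_lt {α : Type*} [Preorder α] {a b c : α} (hab : a < b) (hbc : b < c) :
    ¬ HasMaltsevPoly ((· < ·) : α → α → Prop) := by
  rintro ⟨f, hf, -, hm⟩
  have h := hf a a b b c c hab (hab.trans hbc) hbc
  rw [(hm b a).1, (hm b c).2] at h
  exact lt_irrefl b h

/-- The digraphs `T_3, C_2, C_3, C_5, ...` form an antichain with respect to the
minor conditions `Σ_M, Σ_2, Σ_3, Σ_5, ...`: each `C_p` satisfies `Σ_M` and `Σ_q`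
for primes `q ≠ p` but not `Σ_p`, and `T_3` satisfies every `Σ_q` but not `Σ_M`. -/
theorem stmt_19 :
    (∀ p : ℕ, ∀ hp : p.Prime,
      HasMaltsevPoly (Cedge p) ∧
      (∀ q : ℕ, ∀ hq : q.Prime, q ≠ p → HasCyclicPoly (Cedge p) q hq.pos) ∧
      ¬ HasCyclicPoly (Cedge p) p hp.pos) ∧
    ((∀ q : ℕ, ∀ hq : q.Prime, HasCyclicPoly T3edge q hq.pos) ∧
     ¬ HasMaltsevPoly T3edge) :=
  ⟨fun p hp =>
    ⟨hasMaltsevPoly_cedge p,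
      fun q hq hqp => hasCyclicPoly_cedge_of_coprime hq.pos ((Nat.coprime_primes hq hp).2 hqp),
      not_hasCyclicPoly_cedge_self hp.one_lt⟩,
    fun q hq => hasCyclicPoly_lt q hq.pos,
    not_hasMaltsevPoly_lt (show (0 : Fin 3) < 1 by decide) (show (1 : Fin 3) < 2 by decide)⟩
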